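/- Let (H, ⊳) be a right Post-Hopf algebra over a field K of characteristic zero. Then Prim(H) is closed under ⊳ (if x, y are primitive then x ⊳ y is primitive), and (Prim(H), [·,·], ⊳), where [x,y] = x·y − y·x is the commutator bracket, is a right Post-Lie algebra: for all primitive x, y, z, x ⊳ [y,z] = a_⊳(x,y,z) − a_⊳(x,z,y) and [x,y] ⊳ z = [x ⊳ z, y] + [x, y ⊳ z], where a_⊳(x,y,z) = (x ⊳ y) ⊳ z − x ⊳ (y ⊳ z). -/

import Mathlib

/-!
The right multiplication `γ(z) = (· ⊳ z)` is a unit of the convolution algebra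
`Hom(H, End H)`. The axiom `(x·y) ⊳ z = (x ⊳ z⁽¹⁾)·(y ⊳ z⁽²⁾)` at `x = 1` says that `λ * γ = γ`
for `λ(z) = ((1 ⊳ z) · _)`, so `λ` is the convolution unit and `1 ⊳ z = ε(z)·1`. Evaluating at
the group-like element `1` makes `γ(1)` invertible, and it is idempotent by the second axiom, so
`x ⊳ 1 = x`. Substituting `Δz = z ⊗ 1 + 1 ⊗ z` into the axioms then gives primitivity of
`x ⊳ y` and both Post-Lie identities directly.
-/

open TensorProduct

/-- A right Post-Hopf structure on a Hopf algebra `H`: `r x y = x ⊳ y`. -/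
structure IsRightPostHopf (K H : Type*) [Field K] [Ring H] [HopfAlgebra K H]
    (r : H →ₗ[K] H →ₗ[K] H) : Prop where
  /-- `⊳` is compatible with the counit. -/
  counit_r : ∀ x y : H,
    Coalgebra.counit (R := K) (r x y)
      = Coalgebra.counit (R := K) x * Coalgebra.counit (R := K) y
  /-- `⊳` is a coalgebra morphism: `Δ(x ⊳ y) = Δ(x) ⊳ Δ(y)` componentwise. -/
  comul_r : ∀ x y : H,
    Coalgebra.comul (R := K) (r x y)
      = TensorProduct.map₂ r r (Coalgebra.comul x) (Coalgebra.comul y)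
  /-- `(x·y) ⊳ z = Σ (x ⊳ z⁽¹⁾)·(y ⊳ z⁽²⁾)`. -/
  mul_r : ∀ x y z : H,
    r (x * y) z
      = TensorProduct.lift ((LinearMap.mul K H).compl₁₂ (r x) (r y)) (Coalgebra.comul z)
  /-- `(x ⊳ y) ⊳ z = x ⊳ (Σ (y ⊳ z⁽¹⁾)·z⁽²⁾)`. -/
  r_r : ∀ x y z : H,
    r (r x y) z
      = r x (TensorProduct.lift
          ((LinearMap.mul K H).compl₁₂ (r y) LinearMap.id) (Coalgebra.comul z))
  /-- The right multiplication `γ(z)(y) = y ⊳ z` is convolution invertible. -/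
  conv_inv : ∃ β : H →ₗ[K] H →ₗ[K] H, ∀ x : H,
    TensorProduct.lift ((LinearMap.llcomp K H H H).compl₁₂ r.flip β) (Coalgebra.comul x)
        = Coalgebra.counit (R := K) x • (LinearMap.id : H →ₗ[K] H)
    ∧ TensorProduct.lift ((LinearMap.llcomp K H H H).compl₁₂ β r.flip) (Coalgebra.comul x)
        = Coalgebra.counit (R := K) x • (LinearMap.id : H →ₗ[K] H)


/-- `x` is a primitive element: `Δ(x) = x ⊗ 1 + 1 ⊗ x`. -/
def IsPrimitive (K : Type*) {H : Type*} [Field K] [Ring H] [HopfAlgebra K H] (x : H) : Prop :=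
  Coalgebra.comul (R := K) x = x ⊗ₜ[K] (1 : H) + (1 : H) ⊗ₜ[K] x

section GroupLike

open WithConv

variable {R C A : Type*} [CommSemiring R] [AddCommMonoid C] [Module R C] [Coalgebra R C]
  [Semiring A] [Algebra R A] {c : C}

lemma IsGroupLikeElem.convMul_apply (hc : IsGroupLikeElem R c) (f g : WithConv (C →ₗ[R] A)) :
    (f * g) c = f c * g c := by
  simp [hc.comul_eq_tmul_self]

lemma IsGroupLikeElem.isUnit_apply (hc : IsGroupLikeElem R c) {f : WithConv (C →ₗ[R] A)}
    (hf : IsUnit f) : IsUnit (f c) := by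
  obtain ⟨u, rfl⟩ := hf
  refine ⟨⟨(u : WithConv (C →ₗ[R] A)) c, (↑u⁻¹ : WithConv (C →ₗ[R] A)) c, ?_, ?_⟩, rfl⟩ <;>
    simp [← hc.convMul_apply, hc.counit_eq_one]

end GroupLike

lemma TensorProduct.lift_llcomp_compl₁₂ {R M N : Type*} [CommSemiring R] [AddCommMonoid M]
    [Module R M] [AddCommMonoid N] [Module R N] (f g : M →ₗ[R] Module.End R N) :
    lift ((LinearMap.llcomp R N N N).compl₁₂ f g)
      = LinearMap.mul' R (Module.End R N) ∘ₗ map f g := by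
  ext a b
  rfl

lemma IsPrimitive.counit_eq_zero {K H : Type*} [Field K] [Ring H] [HopfAlgebra K H] {x : H}
    (hx : IsPrimitive K x) : Coalgebra.counit (R := K) x = 0 := by
  have h := Coalgebra.rTensor_counit_comul (R := K) x
  rw [hx, map_add, LinearMap.rTensor_tmul, LinearMap.rTensor_tmul, Bialgebra.counit_one,
    add_eq_right] at h
  simpa using congr(Coalgebra.counit (R := K) (TensorProduct.lid K H $h))

namespace IsRightPostHopf

open Coalgebra LinearMap WithConv

variable {K H : Type*} [Field K] [Ring H] [HopfAlgebra K H] {r : H →ₗ[K] H →ₗ[K] H}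

lemma isUnit_toConv_flip (hr : IsRightPostHopf K H r) : IsUnit (toConv r.flip) := by
  obtain ⟨β, hβ⟩ := hr.conv_inv
  refine ⟨⟨toConv r.flip, toConv β, ?_, ?_⟩, rfl⟩ <;> ext x : 2
  · simpa [lift_llcomp_compl₁₂, Algebra.algebraMap_eq_smul_one, Module.End.one_eq_id]
      using (hβ x).1
  · simpa [lift_llcomp_compl₁₂, Algebra.algebraMap_eq_smul_one, Module.End.one_eq_id]
      using (hβ x).2

lemma one_apply (hr : IsRightPostHopf K H r) (z : H) : r 1 z = counit (R := K) z • 1 := by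
  set leftMul : H →ₗ[K] Module.End K H := LinearMap.mul K H ∘ₗ r 1
  have hleftMul : toConv leftMul * toConv r.flip = toConv r.flip := by
    ext x y : 3
    have hmul : lift ((LinearMap.mul K H).compl₁₂ (r 1) (r y))
        = applyₗ y ∘ₗ mul' K (Module.End K H) ∘ₗ map leftMul r.flip := by
      ext a b
      rfl
    simpa [hmul] using (hr.mul_r 1 y x).symm
  rw [(isUnit_toConv_flip hr).mul_eq_right] at hleftMul
  simpa [leftMul, Algebra.algebraMap_eq_smul_one] using congr($hleftMul z 1)

lemma apply_one (hr : IsRightPostHopf K H r) (x : H) : r x 1 = x := by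
  have hunit : IsUnit (r.flip 1 : Module.End K H) :=
    IsGroupLikeElem.one.isUnit_apply (isUnit_toConv_flip hr)
  have hidem : IsIdempotentElem (r.flip 1 : Module.End K H) := by
    ext y
    simpa [one_apply hr, Algebra.TensorProduct.one_def] using hr.r_r y 1 1
  simpa using congr($((IsIdempotentElem.iff_eq_one_of_isUnit hunit).mp hidem) x)

lemma one_apply_of_isPrimitive (hr : IsRightPostHopf K H r) {y : H} (hy : IsPrimitive K y) :
    r 1 y = 0 := by
  rw [one_apply hr, hy.counit_eq_zero, zero_smul]

lemma mul_apply_of_isPrimitive (hr : IsRightPostHopf K H r) (x y : H) {z : H}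
    (hz : IsPrimitive K z) : r (x * y) z = r x z * y + x * r y z := by
  rw [hr.mul_r, hz]
  simp [apply_one hr]

lemma apply_mul_of_isPrimitive (hr : IsRightPostHopf K H r) (x y : H) {z : H}
    (hz : IsPrimitive K z) : r x (y * z) = r (r x y) z - r x (r y z) := by
  rw [hr.r_r, hz]
  simp [apply_one hr]

lemma isPrimitive_apply (hr : IsRightPostHopf K H r) {x y : H} (hx : IsPrimitive K x)
    (hy : IsPrimitive K y) : IsPrimitive K (r x y) := by
  rw [IsPrimitive, hr.comul_r, hx, hy]
  simp [apply_one hr, one_apply_of_isPrimitive hr hy]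

end IsRightPostHopf

theorem statement2 {K : Type*} [Field K]
    {H : Type*} [Ring H] [HopfAlgebra K H]
    (r : H →ₗ[K] H →ₗ[K] H) (hr : IsRightPostHopf K H r) :
    (∀ x y : H, IsPrimitive K x → IsPrimitive K y → IsPrimitive K (r x y))
    ∧ (∀ x y z : H, IsPrimitive K x → IsPrimitive K y → IsPrimitive K z →
        r x (y * z - z * y)
          = ((r (r x y) z - r x (r y z)) - (r (r x z) y - r x (r z y))))
    ∧ (∀ x y z : H, IsPrimitive K x → IsPrimitive K y → IsPrimitive K z →
        r (x * y - y * x) z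
          = ((r x z) * y - y * (r x z)) + (x * (r y z) - (r y z) * x)) := by
  refine ⟨fun x y hx hy => hr.isPrimitive_apply hx hy, fun x y z _ hy hz => ?_,
    fun x y z _ _ hz => ?_⟩
  · rw [map_sub, hr.apply_mul_of_isPrimitive x y hz, hr.apply_mul_of_isPrimitive x z hy]
  · rw [map_sub, LinearMap.sub_apply, hr.mul_apply_of_isPrimitive x y hz,
      hr.mul_apply_of_isPrimitive y x hz]
    abel
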